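/- The set of points (x,y) in the open triangle Δ = {(x,y) ∈ ℝ² : 1 > x > y > 0} for which there exists a sequence i : ℕ → {0,1} with (x,y) ∈ Δ_{(e,12,12)}(i₁,…,iₙ) for every n ≥ 1 and lim_{n→∞} (1/n)·#{k ≤ n : i_k = 1} = 1/2, has two-dimensional Lebesgue measure zero. (This is the key step showing that the Minkowski question mark analog Φ(e,12,12) is singular.) -/

import Mathlib

open Matrix MeasureTheory Filter

noncomputable section

/-- Projection π(a,b,c) = (b/a, c/a). -/
def projPt (v : Fin 3 → ℝ) : ℝ × ℝ := (v 1 / v 0, v 2 / v 0)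

def Vmat : Matrix (Fin 3) (Fin 3) ℝ := !![1,1,1; 0,1,1; 0,0,1]

def prodSeq (C : Fin 2 → Matrix (Fin 3) (Fin 3) ℝ) (i : ℕ → Fin 2) :
    ℕ → Matrix (Fin 3) (Fin 3) ℝ
  | 0 => 1
  | n + 1 => prodSeq C i n * C (i (n + 1))

/-- The subtriangle: convex hull of the π-images of the columns of V·C_{i₁}⋯C_{iₙ}. -/
def subTri (C : Fin 2 → Matrix (Fin 3) (Fin 3) ℝ) (i : ℕ → Fin 2) (n : ℕ) :
    Set (ℝ × ℝ) :=
  convexHull ℝ (Set.range fun j : Fin 3 => projPt fun k => (Vmat * prodSeq C i n) k j)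

/-- The Farey matrices F₀(e,12,12), F₁(e,12,12). -/
def Fe1212 : Fin 2 → Matrix (Fin 3) (Fin 3) ℝ :=
  ![!![0,0,1; 0,1,0; 1,0,1], !![0,1,1; 1,0,0; 0,0,1]]

/-!
The cell `Δ(w)` of a word `w` is the triangle spanned by the projected columns of
`M = V F_{w₁} ⋯ F_{wₙ}`; since `|det M| = 1`, its area is at most `1 / (a b c)`, where `(a, b, c)`
is the top row of `M`. Appending a letter acts on that row by `v ↦ v F_d`, and the potential
`G(a, b, c) = (3a + 2b + 4c) / (4abc²)`, which dominates `1 / (abc)`, satisfies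
`G(v F₀) + ½ G(v F₁) ≤ (33/50) G(v)`. Summing over all words of length `n` with weight `2^{-#ones}`
gives `∑ 2^{-#ones(w)} area Δ(w) ≤ (9/4)(33/50)ⁿ`. A word with at most `9n/16` ones has weight at
least `2^{-9n/16}`, and `2^{9/16} · 33/50 < 1`, so the cells of such words have summably small
total area. A point with a normal address lies in one of them at every large level, hence in the
`limsup` of these sets, which is null by Borel–Cantelli.
-/

open Set Pointwise

theorem volume_convexHull_range_le (p : Fin 3 → ℝ × ℝ) :
    volume (convexHull ℝ (range p)) ≤ ENNReal.ofReal
      |((p 1).1 - (p 0).1) * ((p 2).2 - (p 0).2) - ((p 2).1 - (p 0).1) * ((p 1).2 - (p 0).2)| := by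
  set L : (ℝ × ℝ) →ₗ[ℝ] ℝ × ℝ := Matrix.toLin (Module.Basis.finTwoProd ℝ)
    (Module.Basis.finTwoProd ℝ) !![(p 1).1 - (p 0).1, (p 2).1 - (p 0).1;
      (p 1).2 - (p 0).2, (p 2).2 - (p 0).2]
  set K : Set (ℝ × ℝ) := Icc 0 1 ×ˢ Icc 0 1
  have hsub : convexHull ℝ (range p) ⊆ p 0 +ᵥ L '' K := by
    refine convexHull_min ?_ ((((convex_Icc 0 1).prod (convex_Icc 0 1)).linear_image L).vadd _)
    rintro _ ⟨j, rfl⟩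
    refine ⟨_, ⟨![(0, 0), (1, 0), (0, 1)] j, ?_, rfl⟩, ?_⟩
    · fin_cases j <;> simp [K]
    · fin_cases j <;> simp [L, Matrix.toLin_finTwoProd_apply, Prod.ext_iff]
  calc volume (convexHull ℝ (range p)) ≤ volume (p 0 +ᵥ L '' K) := measure_mono hsub
    _ = ENNReal.ofReal |LinearMap.det L| * volume K := by
        rw [measure_vadd, Measure.addHaar_image_linearMap]
    _ = _ := by
        rw [Measure.volume_eq_prod, Measure.prod_prod, Real.volume_Icc, LinearMap.det_toLin,
          Matrix.det_fin_two_of]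
        simp

theorem volume_convexHull_projPt_le (M : Matrix (Fin 3) (Fin 3) ℝ) (hM : ∀ j, M 0 j ≠ 0) :
    volume (convexHull ℝ (range fun j => projPt fun k => M k j)) ≤
      ENNReal.ofReal (|M.det| / |M 0 0 * M 0 1 * M 0 2|) := by
  refine (volume_convexHull_range_le _).trans_eq ?_
  rw [← abs_div, Matrix.det_fin_three]
  have := hM 0; have := hM 1; have := hM 2
  congr 2
  simp only [projPt]
  field_simp
  ring

theorem vecMul_prod_map {α m R : Type*} [Fintype m] [DecidableEq m] [Semiring R]
    (C : α → Matrix m m R) (l : List α) (v : m → R) : v ᵥ* (l.map C).prod = l.foldl (fun v a => v ᵥ* C a) v := by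
  induction l generalizing v with
  | nil => simp
  | cons a l ih => simp [← vecMul_vecMul, ih]

theorem abs_det_prod_map {α m R : Type*} [Fintype m] [DecidableEq m] [CommRing R]
    [LinearOrder R] [IsStrictOrderedRing R] (C : α → Matrix m m R) (hC : ∀ a, |(C a).det| = 1) (l : List α) : |(l.map C).prod.det| = 1 := by
  induction l with
  | nil => simp
  | cons a l ih => simp [det_mul, abs_mul, hC, ih]

theorem prodSeq_eq_prod_map_ofFn (C : Fin 2 → Matrix (Fin 3) (Fin 3) ℝ) (i : ℕ → Fin 2) (n : ℕ) :
    prodSeq C i n = ((List.ofFn fun j : Fin n => i (j + 1)).map C).prod := by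
  induction n with
  | zero => rfl
  | succ n ih =>
    rw [prodSeq, ih, List.ofFn_succ', List.map_concat, List.prod_concat]
    rfl

theorem sum_prod_mul_foldl_le {α β : Type*} [Fintype α] (step : β → α → β) (c : α → ℝ)
    (G : β → ℝ) (P : β → Prop) {ρ : ℝ} (hρ : 0 ≤ ρ) (hc : ∀ a, 0 ≤ c a)
    (hP : ∀ b a, P b → P (step b a)) (hG : ∀ b, P b → ∑ a, c a * G (step b a) ≤ ρ * G b)
    (n : ℕ) {b : β} (hb : P b) :
    ∑ w : Fin n → α, (∏ j, c (w j)) * G ((List.ofFn w).foldl step b) ≤ ρ ^ n * G b := by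
  induction n generalizing b with
  | zero => simp
  | succ n ih =>
    rw [← (Fin.consEquiv fun _ => α).sum_comp, Fintype.sum_prod_type]
    calc _ = ∑ a, c a * ∑ w : Fin n → α,
            (∏ j, c (w j)) * G ((List.ofFn w).foldl step (step b a)) := by
          simp [Fin.prod_univ_succ, List.ofFn_succ, Finset.mul_sum, mul_assoc]
      _ ≤ ∑ a, c a * (ρ ^ n * G (step b a)) := by
          gcongr with a
          · exact hc a
          · exact ih (hP b a hb)
      _ ≤ ρ ^ (n + 1) * G b := by
          simp_rw [mul_left_comm (c _), ← Finset.mul_sum, pow_succ, mul_assoc]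
          exact mul_le_mul_of_nonneg_left (hG b hb) (pow_nonneg hρ n)

section Farey

theorem vecMul_Fe1212_zero (v : Fin 3 → ℝ) : v ᵥ* Fe1212 0 = ![v 2, v 1, v 0 + v 2] := by
  ext j; fin_cases j <;> simp [Fe1212, vecMul, dotProduct, Fin.sum_univ_three]

theorem vecMul_Fe1212_one (v : Fin 3 → ℝ) : v ᵥ* Fe1212 1 = ![v 1, v 0, v 0 + v 2] := by
  ext j; fin_cases j <;> simp [Fe1212, vecMul, dotProduct, Fin.sum_univ_three]

theorem abs_det_Fe1212 (a : Fin 2) : |(Fe1212 a).det| = 1 := by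
  fin_cases a <;> simp [Fe1212, det_fin_three]

theorem det_Vmat : Vmat.det = 1 := by simp [Vmat, det_fin_three]

def rowCone : Set (Fin 3 → ℝ) := {v | 0 < v 0 ∧ 0 < v 1 ∧ v 0 ≤ v 2 ∧ v 1 ≤ v 2}

theorem Vmat_zero_mem_rowCone : Vmat 0 ∈ rowCone := by simp [rowCone, Vmat]

theorem vecMul_Fe1212_mem_rowCone {v : Fin 3 → ℝ} (hv : v ∈ rowCone) (a : Fin 2) :
    v ᵥ* Fe1212 a ∈ rowCone := by
  obtain ⟨h0, h1, h02, h12⟩ := hv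
  fin_cases a
  · simp only [Fin.zero_eta, vecMul_Fe1212_zero]
    refine ⟨?_, ?_, ?_, ?_⟩ <;> simp <;> linarith
  · simp only [Fin.mk_one, vecMul_Fe1212_one]
    refine ⟨?_, ?_, ?_, ?_⟩ <;> simp <;> linarith

def potential (v : Fin 3 → ℝ) : ℝ :=
  (3 * v 0 + 2 * v 1 + 4 * v 2) / (4 * v 0 * v 1 * v 2 ^ 2)

theorem potential_nonneg {v : Fin 3 → ℝ} (hv : v ∈ rowCone) : 0 ≤ potential v := by
  obtain ⟨h0, h1, h02, -⟩ := hv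
  have : 0 < v 2 := h0.trans_le h02
  unfold potential
  positivity

theorem one_div_prod_le_potential {v : Fin 3 → ℝ} (hv : v ∈ rowCone) :
    1 / (v 0 * v 1 * v 2) ≤ potential v := by
  obtain ⟨h0, h1, h02, -⟩ := hv
  have : 0 < v 2 := h0.trans_le h02
  rw [potential, div_le_div_iff₀ (by positivity) (by positivity)]
  nlinarith [mul_pos (mul_pos h0 h1) this]

theorem potential_vecMul_Fe1212_le {v : Fin 3 → ℝ} (hv : v ∈ rowCone) :
    potential (v ᵥ* Fe1212 0) + 1 / 2 * potential (v ᵥ* Fe1212 1) ≤ 33 / 50 * potential v := by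
  simp only [vecMul_Fe1212_zero, vecMul_Fe1212_one, potential, cons_val_zero, cons_val_one,
    cons_val_two, head_cons, tail_cons]
  obtain ⟨ha, hb, hac, hbc⟩ := hv
  generalize v 0 = a, v 1 = b, v 2 = c at *
  have hc : 0 < c := ha.trans_le hac
  have key : 50 * a * c * (4 * a + 7 * c + 2 * b) + 25 * c ^ 2 * (6 * a + 4 * c + 3 * b) ≤
      33 * (a + c) ^ 2 * (3 * a + 2 * b + 4 * c) := by
    nlinarith [mul_nonneg ha.le (sq_nonneg (c - 2 * a)),
      mul_nonneg (sub_nonneg.2 hac) (sq_nonneg (c - 2 * a)),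
      mul_nonneg (sub_nonneg.2 hbc) (sq_nonneg (c - 2 * a)),
      mul_nonneg (sub_nonneg.2 hbc) (sq_nonneg a), mul_nonneg hb.le (sq_nonneg a)]
  rw [← sub_nonneg]
  have hdiff : 33 / 50 * ((3 * a + 2 * b + 4 * c) / (4 * a * b * c ^ 2)) -
      ((3 * c + 2 * b + 4 * (a + c)) / (4 * c * b * (a + c) ^ 2) +
        1 / 2 * ((3 * b + 2 * a + 4 * (a + c)) / (4 * b * a * (a + c) ^ 2))) =
      (33 * (a + c) ^ 2 * (3 * a + 2 * b + 4 * c) -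
        (50 * a * c * (4 * a + 7 * c + 2 * b) + 25 * c ^ 2 * (6 * a + 4 * c + 3 * b))) /
        (200 * a * b * c ^ 2 * (a + c) ^ 2) := by
    field_simp
    ring
  rw [hdiff]
  exact div_nonneg (sub_nonneg.2 key) (by positivity)

variable {n : ℕ}

def fareyMat (w : Fin n → Fin 2) : Matrix (Fin 3) (Fin 3) ℝ :=
  Vmat * ((List.ofFn w).map Fe1212).prod

def fareyRow (w : Fin n → Fin 2) : Fin 3 → ℝ :=
  (List.ofFn w).foldl (fun v a => v ᵥ* Fe1212 a) (Vmat 0)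

def fareyCell (w : Fin n → Fin 2) : Set (ℝ × ℝ) :=
  convexHull ℝ (range fun j => projPt fun k => fareyMat w k j)

theorem subTri_eq_fareyCell (i : ℕ → Fin 2) (n : ℕ) :
    subTri Fe1212 i n = fareyCell fun j : Fin n => i (j + 1) := by
  rw [subTri, prodSeq_eq_prod_map_ofFn]
  rfl

theorem fareyMat_zero (w : Fin n → Fin 2) : fareyMat w 0 = fareyRow w := by
  rw [fareyMat, mul_apply_eq_vecMul, vecMul_prod_map, fareyRow]

theorem fareyRow_mem_rowCone (w : Fin n → Fin 2) : fareyRow w ∈ rowCone := by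
  suffices ∀ (l : List (Fin 2)) (v : Fin 3 → ℝ), v ∈ rowCone →
      l.foldl (fun v a => v ᵥ* Fe1212 a) v ∈ rowCone from this _ _ Vmat_zero_mem_rowCone
  intro l
  induction l with
  | nil => exact fun _ hv => hv
  | cons a l ih => exact fun _ hv => ih _ (vecMul_Fe1212_mem_rowCone hv a)

theorem volume_fareyCell_le (w : Fin n → Fin 2) :
    volume (fareyCell w) ≤ ENNReal.ofReal (potential (fareyRow w)) := by
  obtain ⟨h0, h1, h02, -⟩ := fareyRow_mem_rowCone w
  have h2 : 0 < fareyRow w 2 := h0.trans_le h02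
  have hrow : ∀ j, fareyMat w 0 j = fareyRow w j := fun j => by rw [fareyMat_zero]
  refine (volume_convexHull_projPt_le _ fun j => ?_).trans (ENNReal.ofReal_le_ofReal ?_)
  · rw [hrow]
    fin_cases j <;> positivity
  · rw [hrow, hrow, hrow, abs_of_pos (mul_pos (mul_pos h0 h1) h2), fareyMat, det_mul, det_Vmat,
      one_mul, abs_det_prod_map _ abs_det_Fe1212]
    exact one_div_prod_le_potential (fareyRow_mem_rowCone w)

def fareyWeight (a : Fin 2) : ℝ := if a = 1 then 2⁻¹ else 1

theorem fareyWeight_nonneg (a : Fin 2) : 0 ≤ fareyWeight a := by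
  unfold fareyWeight
  split_ifs <;> norm_num

theorem sum_fareyWeight_mul_potential_le (n : ℕ) :
    ∑ w : Fin n → Fin 2, (∏ j, fareyWeight (w j)) * potential (fareyRow w) ≤
      (33 / 50) ^ n * (9 / 4) := by
  have h := sum_prod_mul_foldl_le (fun v a => v ᵥ* Fe1212 a) fareyWeight potential (· ∈ rowCone)
    (ρ := 33 / 50) (by norm_num) fareyWeight_nonneg
    (fun v a hv => vecMul_Fe1212_mem_rowCone hv a)
    (fun v hv => by simpa [Fin.sum_univ_two, fareyWeight] using potential_vecMul_Fe1212_le hv)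
    n Vmat_zero_mem_rowCone
  have h9 : potential (Vmat 0) = 9 / 4 := by simp [potential, Vmat, cons_val]; norm_num
  rwa [h9] at h

theorem one_le_rpow_mul_prod_fareyWeight {i : ℕ → Fin 2} {θ : ℝ}
    (h : (((Finset.range n).filter fun k => i (k + 1) = 1).card : ℝ) ≤ θ * n) :
    1 ≤ (2 : ℝ) ^ (θ * n) * ∏ j : Fin n, fareyWeight (i (j + 1)) := by
  rw [Fin.prod_univ_eq_prod_range (fun k => fareyWeight (i (k + 1)))]
  simp only [fareyWeight, Finset.prod_ite, Finset.prod_const, one_pow, mul_one]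
  rw [inv_pow, ← div_eq_mul_inv, one_le_div (by positivity), ← Real.rpow_natCast]
  exact Real.rpow_le_rpow_of_exponent_le one_le_two h

theorem volume_fareyCell_le_of_one_le (w : Fin n → Fin 2) {K : ℝ}
    (hK : 1 ≤ K * ∏ j, fareyWeight (w j)) :
    volume (fareyCell w) ≤
      ENNReal.ofReal (K * ((∏ j, fareyWeight (w j)) * potential (fareyRow w))) := by
  refine (volume_fareyCell_le w).trans (ENNReal.ofReal_le_ofReal ?_)
  rw [← mul_assoc]
  exact le_mul_of_one_le_left (potential_nonneg (fareyRow_mem_rowCone w)) hK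

end Farey

theorem volume_setOf_mem_subTri_le (θ : ℝ) (n : ℕ) :
    volume {z : ℝ × ℝ | ∃ i : ℕ → Fin 2, z ∈ subTri Fe1212 i n ∧
        (((Finset.range n).filter fun k => i (k + 1) = 1).card : ℝ) ≤ θ * n} ≤
      ENNReal.ofReal (9 / 4 * (2 ^ θ * (33 / 50)) ^ n) := by
  classical
  set K := (2 : ℝ) ^ (θ * n) with hK
  set f : (Fin n → Fin 2) → ℝ := fun w => (∏ j, fareyWeight (w j)) * potential (fareyRow w)
  set W := Finset.univ.filter fun w : Fin n → Fin 2 => 1 ≤ K * ∏ j, fareyWeight (w j)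
  have hf : ∀ w, 0 ≤ K * f w := fun w => mul_nonneg (by positivity) <| mul_nonneg
    (Finset.prod_nonneg fun j _ => fareyWeight_nonneg (w j))
    (potential_nonneg (fareyRow_mem_rowCone w))
  have hcover : {z : ℝ × ℝ | ∃ i : ℕ → Fin 2, z ∈ subTri Fe1212 i n ∧
      (((Finset.range n).filter fun k => i (k + 1) = 1).card : ℝ) ≤ θ * n} ⊆
        ⋃ w ∈ W, fareyCell w := by
    rintro z ⟨i, hz, hi⟩
    rw [subTri_eq_fareyCell] at hz
    exact mem_iUnion₂.2 ⟨_, Finset.mem_filter.2 ⟨Finset.mem_univ _,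
      one_le_rpow_mul_prod_fareyWeight hi⟩, hz⟩
  calc volume _ ≤ volume (⋃ w ∈ W, fareyCell w) := measure_mono hcover
    _ ≤ ∑ w ∈ W, volume (fareyCell w) := measure_biUnion_finset_le _ _
    _ ≤ ∑ w ∈ W, ENNReal.ofReal (K * f w) := Finset.sum_le_sum fun w hw =>
        volume_fareyCell_le_of_one_le w (Finset.mem_filter.1 hw).2
    _ ≤ ∑ w, ENNReal.ofReal (K * f w) := Finset.sum_le_sum_of_subset (Finset.subset_univ _)
    _ = ENNReal.ofReal (K * ∑ w, f w) := by
        rw [Finset.mul_sum, ENNReal.ofReal_sum_of_nonneg fun w _ => hf w]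
    _ ≤ ENNReal.ofReal (K * ((33 / 50) ^ n * (9 / 4))) := by
        gcongr
        exact sum_fareyWeight_mul_potential_le n
    _ = ENNReal.ofReal (9 / 4 * (2 ^ θ * (33 / 50)) ^ n) := by
        rw [hK, Real.rpow_mul_natCast zero_le_two]
        ring_nf

/-- The set of points of the open triangle Δ = {1 > x > y > 0} possessing a normal
Farey (e,12,12) TRIP sequence (frequency of ones tending to 1/2) has Lebesgue measure
zero. -/
theorem stmt16 :
    volume {z : ℝ × ℝ | (z.2 < z.1 ∧ z.1 < 1 ∧ 0 < z.2) ∧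
      ∃ i : ℕ → Fin 2,
        (∀ n : ℕ, 1 ≤ n → z ∈ subTri Fe1212 i n) ∧
        Tendsto
          (fun n : ℕ =>
            (((Finset.range n).filter fun k => i (k + 1) = 1).card : ℝ) / n)
          atTop (nhds (1 / 2))} = 0 := by
  set E : ℕ → Set (ℝ × ℝ) := fun n => {z | ∃ i : ℕ → Fin 2, z ∈ subTri Fe1212 i n ∧
    (((Finset.range n).filter fun k => i (k + 1) = 1).card : ℝ) ≤ 9 / 16 * n}
  -- any frequency threshold in `(1/2, log₂ (50/33))` would do in place of `9/16`
  have hq : (2 : ℝ) ^ (9 / 16 : ℝ) * (33 / 50) < 1 := by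
    have : (2 : ℝ) ^ (9 / 16 : ℝ) < 50 / 33 := by
      refine lt_of_pow_lt_pow_left₀ 16 (by norm_num) ?_
      rw [← Real.rpow_mul_natCast zero_le_two]
      norm_num
    linarith
  have hsum : ∑' n, volume (E n) ≠ ⊤ := by
    refine ne_top_of_le_ne_top ?_ (ENNReal.tsum_le_tsum (volume_setOf_mem_subTri_le (9 / 16)))
    rw [← ENNReal.ofReal_tsum_of_nonneg (fun n => by positivity)
      ((summable_geometric_of_lt_one (by positivity) hq).mul_left _)]
    exact ENNReal.ofReal_ne_top
  refine measure_mono_null (fun z hz => ?_) (measure_limsup_atTop_eq_zero hsum)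
  obtain ⟨-, i, hmem, hfreq⟩ := hz
  rw [mem_limsup_iff_frequently_mem]
  refine Eventually.frequently ?_
  filter_upwards [hfreq.eventually (gt_mem_nhds (show (1 : ℝ) / 2 < 9 / 16 by norm_num)),
    eventually_ge_atTop 1] with n hn h1
  exact ⟨i, hmem n h1, ((div_lt_iff₀ (by positivity)).1 hn).le⟩
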